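/- Let u, v ∈ K[x,y] with v irreducible, deg_y v ≥ 1 and deg_y u < deg_y v, and let h = u/v ∈ K(x,y). Then for every integer r ≥ deg_y v there exist rational functions p_0, …, p_r ∈ K(x), not all zero, and a polynomial q ∈ K[x][y] with deg_y q ≤ deg_y u + (r−1)·deg_y v, such that p_0·h + p_1·D_x h + ⋯ + p_r·D_x^r h = D_y(q/v^r) in K(x,y). -/

import Mathlib

/-
Writing `D_x^i (u/v) = a_i / v^(i+1)` with `deg_y a_i ≤ deg_y u + i deg_y v`, the telescoping
relation multiplied by `v^(r+1)` becomes `Σ p_i a_i v^(r-i) = q_y v - r q v_y`, a `K[x]`-linear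
equation in `p_0, …, p_r` and the coefficients of `q`. After swapping the variables it lives in
`K[x][y]`, where `Q ↦ Q' V - r Q V'` is injective on polynomials of degree `< r deg V`: its
coefficient in degree `deg Q + deg V - 1` is `(deg Q - r deg V) lc Q lc V`. With
`N = deg_y u + (r-1) deg_y v` there are `(r+1) + (N+1)` unknowns against `N + deg V + 1` coefficient
equations, so `r ≥ deg V` gives a nonzero solution (over any domain, by the strong rank
condition), and injectivity forces some `p_i ≠ 0`.
-/

open Polynomial Finset

/-- The derivative with respect to `y` on `K[y][x]`
(we represent bivariate polynomials as `Polynomial (Polynomial K)`,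
the *outer* variable being `x`, the *inner* variable being `y`). -/
noncomputable def DY {K : Type*} [CommRing K] (p : Polynomial (Polynomial K)) :
    Polynomial (Polynomial K) :=
  p.sum fun n a => Polynomial.C (Polynomial.derivative a) * Polynomial.X ^ n

/-- The degree with respect to `y` of an element of `K[y][x]`. -/
noncomputable def degY {K : Type*} [CommRing K] (p : Polynomial (Polynomial K)) : ℕ :=
  p.support.sup fun n => (p.coeff n).natDegree

/-- The embedding of `K[x]` into `K[y][x]` (polynomials free of `y`). -/
noncomputable def liftX {K : Type*} [CommRing K] (p : Polynomial K) :
    Polynomial (Polynomial K) :=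
  p.map (Polynomial.C : K →+* Polynomial K)

/-- The falling factorial `z(z-1)⋯(z-n+1)` of an element of `K`. -/
noncomputable def ffall {K : Type*} [Field K] (z : K) (n : ℕ) : K :=
  ∏ j ∈ Finset.range n, (z - (j : K))

open Polynomial.Bivariate

section Swap

variable {K : Type*} [CommRing K]

theorem coeff_coeff_swap (p : Polynomial (Polynomial K)) (m n : ℕ) :
    ((swap p).coeff m).coeff n = (p.coeff n).coeff m := by
  induction p using Polynomial.induction_on' with
  | add p q hp hq => simp only [map_add, coeff_add, hp, hq]
  | monomial k a =>
    rw [swap_monomial, coeff_mul_C, coeff_map, coeff_C_mul_X_pow, coeff_monomial]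
    split_ifs <;> simp_all [eq_comm]

theorem degY_le_iff {p : Polynomial (Polynomial K)} {k : ℕ} :
    degY p ≤ k ↔ ∀ n, (p.coeff n).natDegree ≤ k := by
  refine Finset.sup_le_iff.trans ⟨fun h n => ?_, fun h n _ => h n⟩
  by_cases hn : n ∈ p.support
  · exact h n hn
  · simp [notMem_support_iff.mp hn]

theorem natDegree_swap (p : Polynomial (Polynomial K)) : (swap p).natDegree = degY p := by
  refine eq_of_forall_ge_iff fun k => ?_
  simp only [degY_le_iff, natDegree_le_iff_coeff_eq_zero, Polynomial.ext_iff, coeff_coeff_swap,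
    coeff_zero]
  exact ⟨fun h n m hm => h m hm n, fun h m hm n => h n m hm⟩

theorem degY_swap (p : Polynomial (Polynomial K)) : degY (swap p) = p.natDegree := by
  rw [← natDegree_swap, swap_swap_apply]

theorem degY_mul_le (p q : Polynomial (Polynomial K)) : degY (p * q) ≤ degY p + degY q := by
  simpa only [← natDegree_swap, map_mul] using natDegree_mul_le

theorem degY_sub_le (p q : Polynomial (Polynomial K)) :
    degY (p - q) ≤ max (degY p) (degY q) := by
  simpa only [← natDegree_swap, map_sub] using natDegree_sub_le _ _

theorem degY_natCast_mul_le (n : ℕ) (p : Polynomial (Polynomial K)) :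
    degY ((n : Polynomial (Polynomial K)) * p) ≤ degY p := by
  simpa only [← natDegree_swap, map_natCast, natDegree_natCast, zero_add] using
    degY_mul_le (n : Polynomial (Polynomial K)) p

theorem degY_derivative_le (p : Polynomial (Polynomial K)) : degY (derivative p) ≤ degY p := by
  refine degY_le_iff.mpr fun n => ?_
  rw [coeff_derivative, ← C_eq_natCast, ← C_1, ← C_add]
  exact (natDegree_mul_C_le _ _).trans (degY_le_iff.mp le_rfl _)

theorem degY_pow_le (p : Polynomial (Polynomial K)) (n : ℕ) :
    degY (p ^ n) ≤ n * degY p := by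
  simpa only [← natDegree_swap, map_pow] using natDegree_pow_le

theorem DY_add (p q : Polynomial (Polynomial K)) : DY (p + q) = DY p + DY q := by
  simp only [DY]
  rw [sum_add_index] <;> simp [add_mul]

theorem DY_monomial (n : ℕ) (a : Polynomial K) :
    DY (monomial n a) = C (derivative a) * X ^ n := by
  simp [DY, sum_monomial_index]

theorem swap_DY (p : Polynomial (Polynomial K)) : swap (DY p) = derivative (swap p) := by
  induction p using Polynomial.induction_on' with
  | add p q hp hq => rw [DY_add, map_add, map_add, hp, hq, derivative_add]
  | monomial n a =>
    rw [DY_monomial, swap_monomial, map_mul, swap_C, map_pow, swap_Y, ← C_pow, derivative_mul,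
      derivative_C, mul_zero, add_zero, derivative_map]

end Swap

section Leibniz

variable {E : Type*} [Field E] {D : E → E} (hD : ∀ a b, D (a * b) = D a * b + a * D b)
include hD

theorem mul_leibniz_pow (b : E) (n : ℕ) : b * D (b ^ n) = n * b ^ n * D b := by
  induction n with
  | zero =>
    have h := hD 1 1
    simp only [mul_one, one_mul, left_eq_add] at h
    simp [h]
  | succ n ih =>
    rw [pow_succ, hD]
    push_cast
    linear_combination b * ih

theorem leibniz_div_pow (a : E) {b : E} (hb : b ≠ 0) (n : ℕ) :
    D (a / b ^ n) = (D a * b - n * a * D b) / b ^ (n + 1) := by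
  rw [eq_div_iff (pow_ne_zero _ hb)]
  have hquot : a / b ^ n * b ^ n = a := div_mul_cancel₀ a (pow_ne_zero n hb)
  have hprod := hD (a / b ^ n) (b ^ n)
  rw [hquot] at hprod
  linear_combination (-b) * hprod - a / b ^ n * mul_leibniz_pow hD b n - (n * D b) * hquot

end Leibniz

noncomputable def dxNumerator {K : Type*} [CommRing K] (u v : Polynomial (Polynomial K)) :
    ℕ → Polynomial (Polynomial K)
  | 0 => u
  | i + 1 => derivative (dxNumerator u v i) * v - (i + 1 : ℕ) * (dxNumerator u v i * derivative v)

theorem iterate_div_eq_dxNumerator_div {K E : Type*} [CommRing K] [Field E] {Dx : E → E}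
    (hDx : ∀ a b, Dx (a * b) = Dx a * b + a * Dx b)
    {ι : Polynomial (Polynomial K) →+* E}
    (hDxι : ∀ q, Dx (ι q) = ι (derivative q)) (u : Polynomial (Polynomial K))
    {v : Polynomial (Polynomial K)} (hv : ι v ≠ 0) (i : ℕ) :
    Dx^[i] (ι u / ι v) = ι (dxNumerator u v i) / ι v ^ (i + 1) := by
  induction i with
  | zero => simp [dxNumerator]
  | succ i ih =>
    rw [Function.iterate_succ_apply', ih, leibniz_div_pow hDx _ hv, hDxι, hDxι, dxNumerator]
    simp only [map_sub, map_mul, map_natCast]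
    ring

theorem sum_mul_iterate_div_eq {K E : Type*} [CommRing K] [Field E] {Dx : E → E}
    (hDx : ∀ a b, Dx (a * b) = Dx a * b + a * Dx b)
    {ι : Polynomial (Polynomial K) →+* E}
    (hDxι : ∀ q, Dx (ι q) = ι (derivative q)) (u : Polynomial (Polynomial K))
    {v : Polynomial (Polynomial K)} (hv : ι v ≠ 0) (c : ℕ → Polynomial (Polynomial K)) (r : ℕ) :
    ∑ i ∈ range (r + 1), ι (c i) * Dx^[i] (ι u / ι v)
      = ι (∑ i ∈ range (r + 1), c i * (dxNumerator u v i * v ^ (r - i))) / ι v ^ (r + 1) := by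
  rw [map_sum, sum_div]
  refine sum_congr rfl fun i hi => ?_
  rw [iterate_div_eq_dxNumerator_div hDx hDxι u hv, map_mul, map_mul, map_pow,
    show r + 1 = i + 1 + (r - i) by have := mem_range.mp hi; omega]
  field_simp
  ring

theorem degY_dxNumerator_le {K : Type*} [CommRing K] (u v : Polynomial (Polynomial K)) (i : ℕ) :
    degY (dxNumerator u v i) ≤ degY u + i * degY v := by
  induction i with
  | zero => simp [dxNumerator]
  | succ i ih =>
    have ha := degY_derivative_le (dxNumerator u v i)
    have hv := degY_derivative_le v
    have hmul := degY_mul_le (derivative (dxNumerator u v i)) v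
    have hmul' := degY_mul_le (dxNumerator u v i) (derivative v)
    rw [dxNumerator, add_mul, one_mul]
    refine (degY_sub_le _ _).trans (max_le (by omega) ((degY_natCast_mul_le _ _).trans (by omega)))

theorem degY_dxNumerator_mul_pow_le {K : Type*} [CommRing K] (u v : Polynomial (Polynomial K))
    {i r : ℕ} (hi : i ≤ r) :
    degY (dxNumerator u v i * v ^ (r - i)) ≤ degY u + r * degY v := by
  have := add_le_add (degY_dxNumerator_le u v i) (degY_pow_le v (r - i))
  rw [add_assoc, ← add_mul, Nat.add_sub_cancel' hi] at this
  exact (degY_mul_le _ _).trans this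

section DerivNumerator

variable {A : Type*} [CommRing A]

/-- `V ^ (r + 1) * (Q / V ^ r)'`. -/
noncomputable def derivNumerator (V : A[X]) (r : ℕ) : A[X] →ₗ[A] A[X] :=
  LinearMap.mulRight A V ∘ₗ derivative - (r : A) • LinearMap.mulRight A (derivative V)

theorem derivNumerator_apply (V : A[X]) (r : ℕ) (Q : A[X]) :
    derivNumerator V r Q = derivative Q * V - (r : A[X]) * (Q * derivative V) := by
  simp [derivNumerator, smul_eq_C_mul]

theorem natDegree_derivNumerator_le (V : A[X]) (r : ℕ) {Q : A[X]} {N : ℕ}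
    (hQ : Q.natDegree ≤ N) : (derivNumerator V r Q).natDegree ≤ N + V.natDegree := by
  rw [derivNumerator_apply]
  refine (natDegree_sub_le_of_le (m := N + V.natDegree) (n := N + V.natDegree) ?_ ?_).trans
    (max_self _).le
  · exact natDegree_mul_le_of_le ((natDegree_derivative_le Q).trans (by omega)) le_rfl
  · exact natDegree_mul_le_of_le (natDegree_natCast r).le
      (natDegree_mul_le_of_le hQ (natDegree_derivative_le V)) |>.trans (by omega)

theorem coeff_derivNumerator (V : A[X]) (r : ℕ) (Q : A[X]) (hV : 1 ≤ V.natDegree) :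
    (derivNumerator V r Q).coeff (Q.natDegree + V.natDegree - 1)
      = ((Q.natDegree : A) - r * V.natDegree) * Q.leadingCoeff * V.leadingCoeff := by
  set k := Q.natDegree
  set d := V.natDegree
  have hV' : (derivative V).coeff (d - 1) = V.leadingCoeff * d := by
    rw [coeff_derivative, Nat.sub_add_cancel hV, Nat.cast_pred hV, sub_add_cancel]; rfl
  have hQV' : (Q * derivative V).coeff (k + (d - 1)) = Q.leadingCoeff * (V.leadingCoeff * d) := by
    rw [coeff_mul_add_eq_of_natDegree_le le_rfl (natDegree_derivative_le V), hV']; rfl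
  rw [derivNumerator_apply, coeff_sub, ← C_eq_natCast, coeff_C_mul, Nat.add_sub_assoc hV, hQV']
  rcases Nat.eq_zero_or_pos k with hk | hk
  · rw [hk, zero_add, eq_C_of_natDegree_eq_zero hk, derivative_C, zero_mul, coeff_zero]
    push_cast
    ring
  · have hQ'V : (derivative Q * V).coeff (k - 1 + d) = Q.leadingCoeff * k * V.leadingCoeff := by
      rw [coeff_mul_add_eq_of_natDegree_le (natDegree_derivative_le Q) le_rfl, coeff_derivative,
        Nat.sub_add_cancel hk, Nat.cast_pred hk, sub_add_cancel]; rfl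
    rw [show k + (d - 1) = k - 1 + d by omega, hQ'V]
    ring

theorem derivNumerator_ne_zero [IsDomain A] [CharZero A] {V : A[X]} (hV : 1 ≤ V.natDegree)
    (r : ℕ) {Q : A[X]} (hQ : Q ≠ 0) (hQr : Q.natDegree < r * V.natDegree) :
    derivNumerator V r Q ≠ 0 := by
  have hV0 : V ≠ 0 := by rintro rfl; simp at hV
  have hk : (Q.natDegree : A) - r * V.natDegree ≠ 0 := by
    rw [sub_ne_zero]; exact_mod_cast hQr.ne
  intro h
  have := coeff_derivNumerator V r Q hV
  rw [h, coeff_zero] at this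
  exact mul_ne_zero (mul_ne_zero hk (leadingCoeff_ne_zero.mpr hQ))
    (leadingCoeff_ne_zero.mpr hV0) this.symm

theorem exists_ne_zero_map_eq_zero_of_natDegree_le {M : Type*} [Nontrivial A] [AddCommGroup M]
    [Module A M] (f : M →ₗ[A] A[X]) {m : ℕ}
    (hf : ∀ x, (f x).natDegree ≤ m) (hM : m + 1 < Module.finrank A M) :
    ∃ x, x ≠ 0 ∧ f x = 0 := by
  let g : M →ₗ[A] Fin (m + 1) → A := LinearMap.pi (fun k => lcoeff A k) ∘ₗ f
  have hg : ¬ Function.Injective g := fun hinj => by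
    have := LinearMap.finrank_le_finrank_of_injective hinj
    rw [Module.finrank_fin_fun] at this
    omega
  rw [← LinearMap.ker_eq_bot] at hg
  obtain ⟨x, hx, hx0⟩ := Submodule.exists_mem_ne_zero_of_ne_bot hg
  refine ⟨x, hx0, Polynomial.ext fun k => ?_⟩
  rw [coeff_zero]
  rcases le_or_gt k m with hk | hk
  · simpa [g] using congrFun (LinearMap.mem_ker.mp hx) ⟨k, Nat.lt_succ_of_le hk⟩
  · exact coeff_eq_zero_of_natDegree_lt ((hf x).trans_lt hk)

theorem exists_sum_smul_eq_derivNumerator [IsDomain A] [CharZero A]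
    {V : A[X]} {r N : ℕ} (hV : 1 ≤ V.natDegree) (hN : N < r * V.natDegree)
    (hVr : V.natDegree ≤ r) (B : ℕ → A[X])
    (hB : ∀ i ≤ r, (B i).natDegree ≤ N + V.natDegree) :
    ∃ p : ℕ → A, (∃ i ≤ r, p i ≠ 0) ∧ ∃ Q : A[X], Q.natDegree ≤ N ∧
      ∑ i ∈ range (r + 1), p i • B i = derivNumerator V r Q := by
  let poly : (Fin (N + 1) → A) →ₗ[A] A[X] :=
    (degreeLT A (N + 1)).subtype ∘ₗ (degreeLTEquiv A (N + 1)).symm.toLinearMap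
  have hpoly : ∀ w, (poly w).natDegree ≤ N := fun w => by
    have : poly w ∈ degreeLT A (N + 1) := ((degreeLTEquiv A (N + 1)).symm w).2
    rwa [degreeLT_succ_eq_degreeLE, mem_degreeLE, ← natDegree_le_iff_degree_le] at this
  let f := (Fintype.linearCombination A fun i : Fin (r + 1) => B i).coprod
    (-(derivNumerator V r ∘ₗ poly))
  have hf : ∀ c w, f (c, w) = ∑ i, c i • B i - derivNumerator V r (poly w) := fun c w => by
    simp only [f, LinearMap.coprod_apply, Fintype.linearCombination_apply, LinearMap.neg_apply,
      LinearMap.comp_apply, sub_eq_add_neg]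
  have hsum : ∀ c : Fin (r + 1) → A, (∑ i, c i • B i).natDegree ≤ N + V.natDegree :=
    fun c => natDegree_sum_le_of_forall_le _ _ fun i _ =>
      (natDegree_smul_le _ _).trans (hB i (Nat.lt_succ_iff.mp i.isLt))
  obtain ⟨⟨c, w⟩, hcw, hfcw⟩ := exists_ne_zero_map_eq_zero_of_natDegree_le f
    (m := N + V.natDegree) (fun ⟨c, w⟩ => by
      rw [hf]
      exact (natDegree_sub_le_of_le (hsum c) (natDegree_derivNumerator_le V r (hpoly w))).trans
        (max_self _).le)
    (by rw [Module.finrank_prod, Module.finrank_fin_fun, Module.finrank_fin_fun]; omega)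
  rw [hf, sub_eq_zero] at hfcw
  have hc : c ≠ 0 := by
    rintro rfl
    have hw : poly w ≠ 0 := fun h => hcw (by simp_all [poly])
    simp only [Pi.zero_apply, zero_smul, sum_const_zero] at hfcw
    exact derivNumerator_ne_zero hV r hw ((hpoly w).trans_lt hN) hfcw.symm
  obtain ⟨i, hi⟩ := Function.ne_iff.mp hc
  refine ⟨fun i => if h : i < r + 1 then c ⟨i, h⟩ else 0,
    ⟨i, by omega, by simpa [Fin.is_le] using hi⟩, poly w, hpoly w, ?_⟩
  rw [← Fin.sum_univ_eq_sum_range (fun i => (if h : i < r + 1 then c ⟨i, h⟩ else 0) • B i)]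
  simpa [Fin.is_le] using hfcw

end DerivNumerator

theorem rational_creative_telescoping_general
    {K : Type*} {E : Type*} [Field K] [CharZero K] [Field E]
    (Dx Dy : E → E)
    (hDxmul : ∀ u v : E, Dx (u * v) = Dx u * v + u * Dx v)
    (hDymul : ∀ u v : E, Dy (u * v) = Dy u * v + u * Dy v)
    (ι : Polynomial (Polynomial K) →+* E)
    (hinj : Function.Injective ι)
    (hDxι : ∀ q : Polynomial (Polynomial K), Dx (ι q) = ι (Polynomial.derivative q))
    (hDyι : ∀ q : Polynomial (Polynomial K), Dy (ι q) = ι (DY q))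
    (u v : Polynomial (Polynomial K)) (hv : Irreducible v)
    (hvy : 1 ≤ degY v) (huv : degY u < degY v)
    (r : ℕ) (hr : degY v ≤ r) :
    ∃ (s t : ℕ → Polynomial K) (q : Polynomial (Polynomial K)),
      (∀ i, t i ≠ 0) ∧ (∃ i ≤ r, s i ≠ 0) ∧
      degY q ≤ degY u + (r - 1) * degY v ∧
      ∑ i ∈ Finset.range (r + 1),
          (ι (liftX (s i)) / ι (liftX (t i))) * Dx^[i] (ι u / ι v)
        = Dy (ι q / ι (v ^ r)) := by
  have hιv : ι v ≠ 0 := (map_ne_zero_iff ι hinj).mpr hv.ne_zero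
  have hrd : degY u + (r - 1) * degY v + degY v = degY u + r * degY v := by
    obtain ⟨k, rfl⟩ := Nat.exists_eq_add_of_le' (hvy.trans hr)
    simp only [add_tsub_cancel_right]
    ring
  obtain ⟨p, hp, Q, hQ, hsum⟩ := exists_sum_smul_eq_derivNumerator (V := swap v) (r := r)
    (N := degY u + (r - 1) * degY v) (by rwa [natDegree_swap]) (by rw [natDegree_swap]; omega)
    (by rwa [natDegree_swap]) (fun i => swap (dxNumerator u v i * v ^ (r - i)))
    (fun i hi => by
      rw [natDegree_swap, natDegree_swap, hrd]
      exact degY_dxNumerator_mul_pow_le u v hi)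
  have htelescope : ∑ i ∈ range (r + 1), liftX (p i) * (dxNumerator u v i * v ^ (r - i))
      = DY (swap Q) * v - r * (swap Q * DY v) := swap.injective <| by
    rw [map_sum, map_sub, map_mul, map_mul, map_mul, map_natCast, swap_DY, swap_DY,
      swap_swap_apply, ← derivNumerator_apply, ← hsum]
    exact sum_congr rfl fun i _ => by rw [map_mul, liftX, swap_map_C, smul_eq_C_mul]
  refine ⟨p, 1, swap Q, fun _ => one_ne_zero, hp, by rwa [degY_swap], ?_⟩
  have hlift1 : liftX (1 : Polynomial K) = 1 := Polynomial.map_one _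
  calc ∑ i ∈ range (r + 1), ι (liftX (p i)) / ι (liftX 1) * Dx^[i] (ι u / ι v)
      = ∑ i ∈ range (r + 1), ι (liftX (p i)) * Dx^[i] (ι u / ι v) := by
        simp only [hlift1, map_one, div_one]
    _ = ι (DY (swap Q) * v - r * (swap Q * DY v)) / ι v ^ (r + 1) := by
        rw [sum_mul_iterate_div_eq hDxmul hDxι u hιv, htelescope]
    _ = Dy (ι (swap Q) / ι (v ^ r)) := by
        rw [map_pow, leibniz_div_pow hDymul _ hιv, hDyι, hDyι]
        simp only [map_sub, map_mul, map_natCast]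
        ring

theorem rational_creative_telescoping
    {K : Type*} {E : Type*} [Field K] [CharZero K] [Field E]
    (Dx Dy : E → E)
    (hDxadd : ∀ u v : E, Dx (u + v) = Dx u + Dx v)
    (hDxmul : ∀ u v : E, Dx (u * v) = Dx u * v + u * Dx v)
    (hDyadd : ∀ u v : E, Dy (u + v) = Dy u + Dy v)
    (hDymul : ∀ u v : E, Dy (u * v) = Dy u * v + u * Dy v)
    (hcomm : ∀ u : E, Dx (Dy u) = Dy (Dx u))
    (ι : Polynomial (Polynomial K) →+* E)
    (hinj : Function.Injective ι)
    (hDxι : ∀ q : Polynomial (Polynomial K), Dx (ι q) = ι (Polynomial.derivative q))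
    (hDyι : ∀ q : Polynomial (Polynomial K), Dy (ι q) = ι (DY q))
    (u v : Polynomial (Polynomial K)) (hv : Irreducible v)
    (hvy : 1 ≤ degY v) (huv : degY u < degY v)
    (r : ℕ) (hr : degY v ≤ r) :
    ∃ (s t : ℕ → Polynomial K) (q : Polynomial (Polynomial K)),
      (∀ i, t i ≠ 0) ∧ (∃ i ≤ r, s i ≠ 0) ∧
      degY q ≤ degY u + (r - 1) * degY v ∧
      ∑ i ∈ Finset.range (r + 1),
          (ι (liftX (s i)) / ι (liftX (t i))) * Dx^[i] (ι u / ι v)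
        = Dy (ι q / ι (v ^ r)) :=
  rational_creative_telescoping_general Dx Dy hDxmul hDymul ι hinj hDxι hDyι u v hv hvy huv r hr
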